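/- Let (Ω, μ) be a finite measure space and (f_n) a sequence of measurable functions with sup_n ‖f_n‖_{L^p(Ω)} < ∞ for some p ∈ [1, ∞). Suppose that for every k ∈ ℕ there is a bounded C¹ function β_k with β_k = 0 on [−1/k, 1/k], β_k' > 0 outside [−1/k, 1/k], and β_k' bounded, such that β_k(f_n) converges in measure (as n → ∞) to some measurable function v_k. Then there exists a measurable function f such that f_n → f in measure. -/

import Mathlib

open MeasureTheory Filter Topology
open scoped ENNReal NNReal

/-- A `C¹` function vanishing on `[-r, r]` with positive derivative outside separates
points that are far apart. -/
private lemma beta_sep {β : ℝ → ℝ} {r : ℝ} (hr : 0 < r) (hβ : ContDiff ℝ 1 β)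
    (h0 : ∀ s : ℝ, |s| ≤ r → β s = 0)
    (h' : ∀ s : ℝ, r < |s| → 0 < deriv β s) :
    ∀ a b : ℝ, 2 * r < |a - b| → β a ≠ β b := by
  have hdiff : Differentiable ℝ β := hβ.differentiable one_ne_zero
  have hdc : Continuous (deriv β) := hβ.continuous_deriv le_rfl
  have hd0 : ∀ s : ℝ, |s| < r → deriv β s = 0 := by
    intro s hs
    have hmem : {u : ℝ | |u| < r} ∈ 𝓝 s :=
      (isOpen_lt continuous_abs continuous_const).mem_nhds hs
    have heq : β =ᶠ[𝓝 s] fun _ => (0 : ℝ) := by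
      filter_upwards [hmem] with u hu using h0 u hu.le
    rw [heq.deriv_eq, deriv_const]
  have hdnn : ∀ s : ℝ, 0 ≤ deriv β s := by
    intro s
    rcases lt_trichotomy |s| r with hlt | heq | hgt
    · exact (hd0 s hlt).ge
    · rcases (abs_eq hr.le).mp heq with hs | hs
      · rw [hs]
        have ht : Tendsto (deriv β) (𝓝[>] r) (𝓝 (deriv β r)) :=
          (hdc.tendsto r).mono_left nhdsWithin_le_nhds
        refine ge_of_tendsto ht ?_
        refine eventually_nhdsWithin_of_forall fun u hu => ?_
        exact (h' u (by rw [abs_of_pos (hr.trans hu)]; exact hu)).le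
      · rw [hs]
        have ht : Tendsto (deriv β) (𝓝[<] (-r)) (𝓝 (deriv β (-r))) :=
          (hdc.tendsto (-r)).mono_left nhdsWithin_le_nhds
        refine ge_of_tendsto ht ?_
        refine eventually_nhdsWithin_of_forall fun u hu => ?_
        have hu' : u < -r := hu
        exact (h' u (by rw [abs_of_neg (by linarith)]; linarith)).le
    · exact (h' s hgt).le
  have hmono : Monotone β := monotone_of_deriv_nonneg hdiff hdnn
  have hsmR : StrictMonoOn β (Set.Ici r) := by
    refine strictMonoOn_of_deriv_pos (convex_Ici r) hβ.continuous.continuousOn ?_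
    intro x hx
    rw [interior_Ici] at hx
    exact h' x (by rw [abs_of_pos (hr.trans hx)]; exact hx)
  have hsmL : StrictMonoOn β (Set.Iic (-r)) := by
    refine strictMonoOn_of_deriv_pos (convex_Iic (-r)) hβ.continuous.continuousOn ?_
    intro x hx
    rw [interior_Iic] at hx
    have hx' : x < -r := hx
    refine h' x ?_
    rw [abs_of_neg (by linarith)]
    linarith
  have hmain : ∀ a b : ℝ, a < b → 2 * r < b - a → β a < β b := by
    intro a b hab hgap
    rcases le_or_gt b r with hb | hb
    · have ha : a < -r := by linarith
      have h1 : β a < β (min b (-r)) :=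
        hsmL (Set.mem_Iic.mpr ha.le) (Set.mem_Iic.mpr (min_le_right _ _)) (lt_min hab ha)
      exact h1.trans_le (hmono (min_le_left _ _))
    · have h1 : β (max a r) < β b :=
        hsmR (Set.mem_Ici.mpr (le_max_right _ _)) (Set.mem_Ici.mpr hb.le) (max_lt hab hb)
      exact (hmono (le_max_left a r)).trans_lt h1
  intro a b hab
  rcases lt_trichotomy a b with hlt | heq | hgt
  · exact (hmain a b hlt (by rw [abs_sub_comm, abs_of_pos (by linarith)] at hab; linarith)).ne
  · simp [heq, abs_zero] at hab; linarith
  · exact (hmain b a hgt (by rw [abs_of_pos (by linarith)] at hab; linarith)).ne'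

/-- Quantitative separation on a compact set. -/
lemma exists_gap {β : ℝ → ℝ} (hβcont : Continuous β) {M ε : ℝ}
    (hinj : ∀ a b : ℝ, |a| ≤ M → |b| ≤ M → ε ≤ |a - b| → β a ≠ β b) :
    ∃ c : ℝ, 0 < c ∧ ∀ a b : ℝ, |a| ≤ M → |b| ≤ M → ε ≤ |a - b| → c ≤ |β a - β b| := by
  set K : Set (ℝ × ℝ) := {x | |x.1| ≤ M ∧ |x.2| ≤ M ∧ ε ≤ |x.1 - x.2|} with hKdef
  rcases K.eq_empty_or_nonempty with hK | hK
  · refine ⟨1, one_pos, fun a b ha hb hab => ?_⟩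
    exact absurd (show (a, b) ∈ K from ⟨ha, hb, hab⟩) (by rw [hK]; exact Set.notMem_empty _)
  · have hKclosed : IsClosed K := by
      have h1 : IsClosed {x : ℝ × ℝ | |x.1| ≤ M} :=
        isClosed_le (continuous_fst.abs) continuous_const
      have h2 : IsClosed {x : ℝ × ℝ | |x.2| ≤ M} :=
        isClosed_le (continuous_snd.abs) continuous_const
      have h3 : IsClosed {x : ℝ × ℝ | ε ≤ |x.1 - x.2|} :=
        isClosed_le continuous_const ((continuous_fst.sub continuous_snd).abs)
      have : K = {x : ℝ × ℝ | |x.1| ≤ M} ∩ ({x : ℝ × ℝ | |x.2| ≤ M} ∩ {x : ℝ × ℝ | ε ≤ |x.1 - x.2|}) := by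
        ext x; simp [hKdef, and_assoc]
      rw [this]
      exact h1.inter (h2.inter h3)
    have hKsub : K ⊆ Set.Icc (-M) M ×ˢ Set.Icc (-M) M := by
      rintro ⟨a, b⟩ ⟨ha, hb, -⟩
      exact ⟨abs_le.mp ha, abs_le.mp hb⟩
    have hKcpt : IsCompact K :=
      (isCompact_Icc.prod isCompact_Icc).of_isClosed_subset hKclosed hKsub
    have hcont : ContinuousOn (fun x : ℝ × ℝ => |β x.1 - β x.2|) K :=
      (((hβcont.comp continuous_fst).sub (hβcont.comp continuous_snd)).abs).continuousOn
    obtain ⟨x0, hx0K, hx0min⟩ := hKcpt.exists_isMinOn hK hcont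
    obtain ⟨h1, h2, h3⟩ := hx0K
    refine ⟨|β x0.1 - β x0.2|, ?_, fun a b ha hb hab => ?_⟩
    · rw [abs_pos, sub_ne_zero]
      exact hinj _ _ h1 h2 h3
    · exact hx0min (show (a, b) ∈ K from ⟨ha, hb, hab⟩)

private lemma cheb {Ω : Type*} [MeasurableSpace Ω] (μ : Measure Ω) {p : ℝ≥0∞} (hp1 : 1 ≤ p)
    (hp_top : p ≠ ∞) {f : ℕ → Ω → ℝ} (hf : ∀ n, Measurable (f n)) {C : ℝ≥0∞} (hC : C < ∞)
    (hbound : ∀ n, eLpNorm (f n) p μ ≤ C) {δ' : ℝ≥0∞} (hδ' : 0 < δ') :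
    ∃ M : ℝ, 1 ≤ M ∧ ∀ n, μ {ω | M ≤ |f n ω|} ≤ δ' := by
  set t := p.toReal with ht
  have ht1 : 1 ≤ t := by
    have := ENNReal.toReal_mono hp_top hp1
    simpa using this
  have ht0 : 0 ≤ t := by linarith
  set D := C ^ t with hDdef
  have hD : D ≠ ∞ := ENNReal.rpow_ne_top_of_nonneg ht0 hC.ne
  set δ'' := min δ' 1 with hδ''def
  have hδ''0 : δ'' ≠ 0 := by
    simp only [hδ''def, ne_eq, min_eq_iff]
    rintro (⟨h, -⟩ | ⟨h, -⟩) <;> simp_all [hδ'.ne']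
  have hδ''top : δ'' ≠ ∞ := ne_top_of_le_ne_top ENNReal.one_ne_top (min_le_right _ _)
  have hfin : D / δ'' ≠ ∞ := (ENNReal.div_lt_top hD hδ''0).ne
  set M := max 1 (D / δ'').toReal with hMdef
  have hM1 : 1 ≤ M := le_max_left _ _
  have hcast : D / δ'' ≤ ENNReal.ofReal M := by
    rw [← ENNReal.ofReal_toReal hfin]
    exact ENNReal.ofReal_le_ofReal (le_max_right _ _)
  refine ⟨M, hM1, fun n => ?_⟩
  have hMpos : (0 : ℝ) < M := by linarith
  have hε0 : (ENNReal.ofReal M) ≠ 0 := (ENNReal.ofReal_pos.mpr hMpos).ne'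
  have hset : {ω | M ≤ |f n ω|} = {ω | ENNReal.ofReal M ≤ ‖f n ω‖ₑ} := by
    ext ω
    rw [Set.mem_setOf_eq, Set.mem_setOf_eq, Real.enorm_eq_ofReal_abs,
      ENNReal.ofReal_le_ofReal_iff (abs_nonneg _)]
  have hcheb := meas_ge_le_mul_pow_eLpNorm_enorm μ (zero_lt_one.trans_le hp1).ne' hp_top
    (hf n).aestronglyMeasurable hε0 (by simp)
  rw [hset]
  refine hcheb.trans ?_
  have h1 : eLpNorm (f n) p μ ^ t ≤ D := ENNReal.rpow_le_rpow (hbound n) ht0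
  have h2 : D / δ'' ≤ (ENNReal.ofReal M) ^ t := by
    refine hcast.trans ?_
    calc ENNReal.ofReal M = (ENNReal.ofReal M) ^ (1 : ℝ) := (ENNReal.rpow_one _).symm
      _ ≤ (ENNReal.ofReal M) ^ t :=
        ENNReal.rpow_le_rpow_of_exponent_le (ENNReal.one_le_ofReal.mpr hM1) ht1
  have h3 : (ENNReal.ofReal M)⁻¹ ^ t ≤ (D / δ'')⁻¹ := by
    rw [ENNReal.inv_rpow]
    exact ENNReal.inv_le_inv.mpr h2
  calc (ENNReal.ofReal M)⁻¹ ^ t * eLpNorm (f n) p μ ^ t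
      ≤ (D / δ'')⁻¹ * D := mul_le_mul' h3 h1
    _ ≤ δ'' := by
        rcases eq_or_ne D 0 with hD0 | hD0
        · simp [hD0]
        · rw [ENNReal.inv_div (Or.inl hδ''top) (Or.inl hδ''0), div_eq_mul_inv, mul_assoc,
            ENNReal.inv_mul_cancel hD0 hD, mul_one]
    _ ≤ δ' := min_le_left _ _

/-- Reconstruction of a limit in measure from limits of truncation-type compositions:
if `(fₙ)` is bounded in `L^p` and for every `k ≥ 1` there is a bounded `C¹` function
`β_k`, vanishing on `[−1/k, 1/k]`, with `β_k' > 0` outside and `β_k'` bounded, such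
that `β_k ∘ fₙ` converges in measure, then `fₙ` itself converges in measure. -/
theorem tendstoInMeasure_of_truncations
    {Ω : Type*} [MeasurableSpace Ω] (μ : Measure Ω) [IsFiniteMeasure μ]
    (p : ℝ≥0∞) (hp1 : 1 ≤ p) (hp_top : p ≠ ∞)
    (f : ℕ → Ω → ℝ) (hf : ∀ n, Measurable (f n))
    (C : ℝ≥0∞) (hC : C < ∞) (hbound : ∀ n, eLpNorm (f n) p μ ≤ C)
    (h : ∀ k : ℕ, 1 ≤ k → ∃ β : ℝ → ℝ, ∃ v : Ω → ℝ,
      ContDiff ℝ 1 β ∧ (∃ B, ∀ s, |β s| ≤ B) ∧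
      (∀ s : ℝ, |s| ≤ 1 / (k : ℝ) → β s = 0) ∧
      (∀ s : ℝ, 1 / (k : ℝ) < |s| → 0 < deriv β s) ∧
      (∃ B', ∀ s, |deriv β s| ≤ B') ∧
      Measurable v ∧ TendstoInMeasure μ (fun n => β ∘ f n) atTop v) :
    ∃ flim : Ω → ℝ, Measurable flim ∧ TendstoInMeasure μ f atTop flim := by
  -- Step 1: the sequence is Cauchy in measure.
  have key : ∀ ε : ℝ, 0 < ε → ∀ δ : ℝ≥0∞, 0 < δ →
      ∃ N : ℕ, ∀ m, N ≤ m → ∀ n, N ≤ n → μ {ω | ε ≤ |f n ω - f m ω|} ≤ δ := by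
    intro ε hε δ hδ
    obtain ⟨k, hk⟩ := exists_nat_gt (2 / ε)
    have hkpos : (0 : ℝ) < k := lt_trans (div_pos two_pos hε) hk
    have hk1 : 1 ≤ k := by exact_mod_cast hkpos
    have hrpos : (0 : ℝ) < 1 / (k : ℝ) := by positivity
    have hkε : 2 * (1 / (k : ℝ)) < ε := by
      rw [div_lt_iff₀ hε] at hk
      rw [mul_one_div, div_lt_iff₀ hkpos]
      linarith [mul_comm ε (k : ℝ)]
    obtain ⟨β, v, hβC1, ⟨B, hB⟩, hβ0, hβ', ⟨B', hB'⟩, hv, hconv⟩ := h k hk1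
    have hδ' : (0 : ℝ≥0∞) < δ / 2 / 2 :=
      ENNReal.div_pos (ENNReal.div_pos hδ.ne' ENNReal.ofNat_ne_top).ne' ENNReal.ofNat_ne_top
    obtain ⟨M, hM1, hMcheb⟩ := cheb μ hp1 hp_top hf hC hbound hδ'
    have hsep := beta_sep hrpos hβC1 hβ0 hβ'
    obtain ⟨c, hc0, hc⟩ := exists_gap hβC1.continuous
      (fun a b ha hb hab => hsep a b (lt_of_lt_of_le hkε hab))
    obtain ⟨N, hN⟩ := ENNReal.tendsto_atTop_zero.mp (tendstoInMeasure_iff_dist.mp hconv (c / 2) (half_pos hc0)) _ hδ'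
    refine ⟨N, fun m hm n hn => ?_⟩
    have hsubset : {ω | ε ≤ |f n ω - f m ω|} ⊆
        ({ω | M ≤ |f n ω|} ∪ {ω | M ≤ |f m ω|}) ∪
        ({x | c / 2 ≤ dist ((β ∘ f n) x) (v x)} ∪ {x | c / 2 ≤ dist ((β ∘ f m) x) (v x)}) := by
      intro ω hω
      by_contra hcon
      simp only [Set.mem_union, Set.mem_setOf_eq, not_or, not_le, Function.comp_apply,
        Real.dist_eq] at hcon
      obtain ⟨⟨h1, h2⟩, h3, h4⟩ := hcon
      have hcc : c ≤ |β (f n ω) - β (f m ω)| := hc _ _ h1.le h2.le hω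
      have htri : |β (f n ω) - β (f m ω)| ≤ |β (f n ω) - v ω| + |β (f m ω) - v ω| := by
        have := abs_sub_le (β (f n ω)) (v ω) (β (f m ω))
        rw [abs_sub_comm (v ω) (β (f m ω))] at this
        linarith
      linarith
    calc μ {ω | ε ≤ |f n ω - f m ω|}
        ≤ μ (({ω | M ≤ |f n ω|} ∪ {ω | M ≤ |f m ω|}) ∪
            ({x | c / 2 ≤ dist ((β ∘ f n) x) (v x)} ∪ {x | c / 2 ≤ dist ((β ∘ f m) x) (v x)})) :=
          measure_mono hsubset
      _ ≤ (μ {ω | M ≤ |f n ω|} + μ {ω | M ≤ |f m ω|}) +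
            (μ {x | c / 2 ≤ dist ((β ∘ f n) x) (v x)} + μ {x | c / 2 ≤ dist ((β ∘ f m) x) (v x)}) :=
          (measure_union_le _ _).trans (add_le_add (measure_union_le _ _) (measure_union_le _ _))
      _ ≤ (δ / 2 / 2 + δ / 2 / 2) + (δ / 2 / 2 + δ / 2 / 2) :=
          add_le_add (add_le_add (hMcheb n) (hMcheb m)) (add_le_add (hN n hn) (hN m hm))
      _ = δ := by rw [ENNReal.add_halves, ENNReal.add_halves]
  -- Step 2: extract a rapidly Cauchy subsequence.
  have hhalf : ∀ j : ℕ, (0 : ℝ) < (1 / 2) ^ j := fun j => by positivity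
  choose N hN using fun j : ℕ => key ((1 / 2) ^ j) (hhalf j) (ENNReal.ofReal ((1 / 2) ^ j))
    (ENNReal.ofReal_pos.mpr (hhalf j))
  set ns : ℕ → ℕ := fun j => Nat.rec (N 0) (fun j ih => max (N (j + 1)) (ih + 1)) j with hnsdef
  have hns_succ : ∀ j, ns (j + 1) = max (N (j + 1)) (ns j + 1) := fun j => rfl
  have hns_mono : StrictMono ns := strictMono_nat_of_lt_succ fun j =>
    lt_of_lt_of_le (Nat.lt_succ_self _) (by rw [hns_succ]; exact le_max_right _ _)
  have hns_ge : ∀ j, N j ≤ ns j := by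
    intro j
    cases j with
    | zero => exact le_rfl
    | succ j => rw [hns_succ]; exact le_max_left _ _
  have hE : ∀ j, μ {ω | (1 / 2 : ℝ) ^ j ≤ |f (ns (j + 1)) ω - f (ns j) ω|} ≤
      ENNReal.ofReal ((1 / 2) ^ j) := fun j =>
    hN j (ns j) (hns_ge j) (ns (j + 1)) ((hns_ge j).trans (hns_mono (Nat.lt_succ_self j)).le)
  have htsum : (∑' j, μ {ω | (1 / 2 : ℝ) ^ j ≤ |f (ns (j + 1)) ω - f (ns j) ω|}) ≠ ∞ := by
    refine ne_top_of_le_ne_top ?_ (ENNReal.tsum_le_tsum hE)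
    rw [← ENNReal.ofReal_tsum_of_nonneg (fun j => (hhalf j).le) summable_geometric_two]
    exact ENNReal.ofReal_ne_top
  have hlimsup := measure_limsup_atTop_eq_zero htsum
  have hae : ∀ᵐ ω ∂μ, ∀ᶠ j in atTop, |f (ns (j + 1)) ω - f (ns j) ω| < (1 / 2) ^ j := by
    have h0 : ∀ᵐ ω ∂μ, ω ∉
        limsup (fun j => {ω | (1 / 2 : ℝ) ^ j ≤ |f (ns (j + 1)) ω - f (ns j) ω|}) atTop :=
      measure_eq_zero_iff_ae_notMem.mp hlimsup
    filter_upwards [h0] with ω hω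
    rw [mem_limsup_iff_frequently_mem, Filter.not_frequently] at hω
    filter_upwards [hω] with j hj
    exact not_le.mp hj
  have hcauchy : ∀ᵐ ω ∂μ, ∃ l : ℝ, Tendsto (fun j => f (ns j) ω) atTop (𝓝 l) := by
    filter_upwards [hae] with ω hω
    obtain ⟨J, hJ⟩ := eventually_atTop.mp hω
    have hcs : CauchySeq fun n => f (ns (n + J)) ω := by
      refine cauchySeq_of_le_geometric (1 / 2) ((1 / 2) ^ J) (by norm_num) fun n => ?_
      have hidx : n + 1 + J = (n + J) + 1 := by omega
      rw [Real.dist_eq, hidx]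
      calc |f (ns (n + J)) ω - f (ns (n + J + 1)) ω|
          = |f (ns (n + J + 1)) ω - f (ns (n + J)) ω| := abs_sub_comm _ _
        _ ≤ (1 / 2) ^ (n + J) := (hJ (n + J) (Nat.le_add_left _ _)).le
        _ = (1 / 2) ^ J * (1 / 2) ^ n := by rw [pow_add]; ring
    obtain ⟨l, hl⟩ := cauchySeq_tendsto_of_complete hcs
    exact ⟨l, (Filter.tendsto_add_atTop_iff_nat J).mp hl⟩
  obtain ⟨flim, hflim_meas, hflim_tendsto⟩ :=
    measurable_limit_of_tendsto_metrizable_ae (fun j => (hf (ns j)).aemeasurable) hcauchy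
  refine ⟨flim, hflim_meas, ?_⟩
  have hsubconv : TendstoInMeasure μ (fun j => f (ns j)) atTop flim :=
    tendstoInMeasure_of_tendsto_ae (fun j => (hf (ns j)).aestronglyMeasurable) hflim_tendsto
  rw [tendstoInMeasure_iff_dist]
  intro ε hε
  rw [ENNReal.tendsto_atTop_zero]
  intro δ hδ
  have hδ2 : (0 : ℝ≥0∞) < δ / 2 := ENNReal.div_pos hδ.ne' ENNReal.ofNat_ne_top
  obtain ⟨N₀, hN₀⟩ := key (ε / 2) (half_pos hε) (δ / 2) hδ2
  obtain ⟨J₀, hJ₀⟩ := ENNReal.tendsto_atTop_zero.mp (tendstoInMeasure_iff_dist.mp hsubconv (ε / 2) (half_pos hε)) _ hδ2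
  set j₀ := max J₀ N₀ with hj₀def
  have h1 : N₀ ≤ ns j₀ := le_trans (le_max_right _ _) hns_mono.le_apply
  refine ⟨N₀, fun n hn => ?_⟩
  have hsubset : {x | ε ≤ dist (f n x) (flim x)} ⊆
      {ω | ε / 2 ≤ |f n ω - f (ns j₀) ω|} ∪ {x | ε / 2 ≤ dist (f (ns j₀) x) (flim x)} := by
    intro ω hω
    by_contra hcon
    simp only [Set.mem_union, Set.mem_setOf_eq, not_or, not_le, Real.dist_eq] at hcon hω
    obtain ⟨h2, h3⟩ := hcon
    have := abs_sub_le (f n ω) (f (ns j₀) ω) (flim ω)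
    linarith
  calc μ {x | ε ≤ dist (f n x) (flim x)}
      ≤ μ ({ω | ε / 2 ≤ |f n ω - f (ns j₀) ω|} ∪ {x | ε / 2 ≤ dist (f (ns j₀) x) (flim x)}) :=
        measure_mono hsubset
    _ ≤ μ {ω | ε / 2 ≤ |f n ω - f (ns j₀) ω|} + μ {x | ε / 2 ≤ dist (f (ns j₀) x) (flim x)} :=
        measure_union_le _ _
    _ ≤ δ / 2 + δ / 2 := add_le_add (hN₀ (ns j₀) h1 n hn) (hJ₀ j₀ (le_max_left _ _))
    _ = δ := ENNReal.add_halves δ
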